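/- arXiv:0903.1099 — 7 statements merged into one kernel-verified Lean document; each statement's English description precedes it below -/
import Mathlib

section
/- Let R be a commutative integral domain that is not a field. If R is perfect (every R-module has a projective cover), then R is a field — contradiction; hence a perfect commutative integral domain is a field. -/
/-!
Let `f : P → K` be a projective cover of the fraction field `K` of `R`. Since `K` is divisible,
`aP + ker f = P` for every `a ≠ 0`, so `aP = P` because `ker f` is superfluous. A nonzero
functional on the projective module `P` then takes a nonzero value `r` divisible by every
nonzero `a`; taking `a = r²` makes `r` a unit, hence every nonzero `a` is a unit.
-/

universe u

/-- `f : P →ₗ[R] M` is a projective cover of `M`: `P` is projective, `f` is surjective,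
and `ker f` is superfluous (small) in `P`. -/
def IsProjectiveCover (R : Type u) [CommRing R] {P M : Type u}
    [AddCommGroup P] [Module R P] [AddCommGroup M] [Module R M] (f : P →ₗ[R] M) : Prop :=
  Module.Projective R P ∧ Function.Surjective f ∧
    ∀ N : Submodule R P, N ⊔ LinearMap.ker f = ⊤ → N = ⊤

/-- A commutative ring is perfect iff every module has a projective cover. -/
def IsPerfectRing (R : Type u) [CommRing R] : Prop :=
  ∀ (M : Type u) (_ : AddCommGroup M) (_ : Module R M),
    ∃ (P : Type u) (_ : AddCommGroup P) (_ : Module R P) (f : P →ₗ[R] M),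
      IsProjectiveCover R f

open Function

theorem isField_of_ne_zero_forall_dvd {R : Type*} [CommRing R] [IsDomain R] {r : R}
    (hr : r ≠ 0) (hdvd : ∀ a : R, a ≠ 0 → a ∣ r) : IsField R := by
  obtain ⟨t, ht⟩ := hdvd (r * r) (mul_ne_zero hr hr)
  have hrt : r * t = 1 := mul_left_cancel₀ hr (by rw [mul_one, ← mul_assoc, ← ht])
  have hunit : IsUnit r := .of_mul_eq_one t hrt
  refine ⟨exists_pair_ne R, mul_comm, fun ha => ?_⟩
  exact (isUnit_of_dvd_unit (hdvd _ ha) hunit).exists_right_inv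

theorem isField_of_projective_of_surjective_smul {R P : Type*} [CommRing R] [IsDomain R]
    [AddCommGroup P] [Module R P] [Module.Projective R P] [Nontrivial P]
    (hP : ∀ a : R, a ≠ 0 → Surjective (a • · : P → P)) : IsField R := by
  obtain ⟨x, hx⟩ := exists_ne (0 : P)
  obtain ⟨φ, hφ⟩ := Module.Projective.exists_dual_ne_zero R hx
  refine isField_of_ne_zero_forall_dvd hφ fun a ha => ?_
  obtain ⟨y, rfl⟩ := hP a ha x
  exact ⟨φ y, by simp⟩

theorem surjective_smul_of_superfluous_ker {R P M : Type*} [CommRing R]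
    [AddCommGroup P] [Module R P] [AddCommGroup M] [Module R M] {f : P →ₗ[R] M}
    (hf : Surjective f) (hker : ∀ N : Submodule R P, N ⊔ LinearMap.ker f = ⊤ → N = ⊤)
    {a : R} (ha : Surjective (a • · : M → M)) : Surjective (a • · : P → P) := by
  have hsup : LinearMap.range (LinearMap.lsmul R P a) ⊔ LinearMap.ker f = ⊤ := by
    refine eq_top_iff.mpr fun p _ => Submodule.mem_sup.mpr ?_
    obtain ⟨m, hm⟩ := ha (f p)
    obtain ⟨q, rfl⟩ := hf m
    refine ⟨a • q, ⟨q, rfl⟩, p - a • q, ?_, add_sub_cancel _ _⟩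
    simp only [LinearMap.mem_ker, map_sub, map_smul, hm, sub_self]
  exact LinearMap.range_eq_top.mp (hker _ hsup)

theorem surjective_smul_of_algebraMap_ne_zero {R K : Type*} [CommRing R] [Field K]
    [Algebra R K] {a : R} (ha : algebraMap R K a ≠ 0) : Surjective (a • · : K → K) :=
  fun m => ⟨(algebraMap R K a)⁻¹ * m, by simp [Algebra.smul_def, ha]⟩

/-- A perfect commutative integral domain is a field. -/
theorem perfect_domain_isField (R : Type u) [CommRing R] [IsDomain R]
    (h : IsPerfectRing R) : IsField R := by
  obtain ⟨P, _, _, f, _, hsurj, hker⟩ := h (FractionRing R) inferInstance inferInstance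
  have : Nontrivial P := hsurj.nontrivial
  refine isField_of_projective_of_surjective_smul (P := P) fun a ha => ?_
  refine surjective_smul_of_superfluous_ker hsurj hker (surjective_smul_of_algebraMap_ne_zero ?_)
  exact IsFractionRing.to_map_ne_zero_of_mem_nonZeroDivisors (mem_nonZeroDivisors_of_ne_zero ha)
end

section
/- A commutative ring R is perfect if and only if R satisfies the descending chain condition on principal ideals. -/
universe u

/-- An almost perfect domain: an integral domain such that every proper quotient is perfect. -/
def IsAPD (R : Type u) [CommRing R] [IsDomain R] : Prop :=
  ∀ I : Ideal R, I ≠ ⊥ → IsPerfectRing (R ⧸ I)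

/-!
Perfect ⇒ DCC (Bass). Write a chain of principal ideals as `f (n + 1) = r n * f n`. The direct
limit of `R → R → ⋯` along the multiplications by `r n` is flat, and a flat module with a projective
cover is projective, so its relations split off the free module. The coordinate functionals dual
to the relations, applied to such a retraction, telescope to `f (m + 1) ∣ f m` for all large `m`.

DCC ⇒ perfect. The DCC makes the Jacobson radical `J` T-nilpotent, which gives Nakayama's lemma for
arbitrary modules; together with Fitting's lemma it also writes `1` as a sum of idempotents `e i`
whose corners `e i • R` are local. For a module `M`, a maximal family of generators `e i • m`
independent modulo `J` spans `M` modulo `J • M`, so the induced map `⨁ e i • R → M` is surjective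
with kernel inside `J • P`: a projective cover.
-/

namespace Ideal

variable {R : Type*} [CommRing R]

def IsTNilpotent (J : Ideal R) : Prop :=
  ∀ a : ℕ → R, (∀ n, a n ∈ J) → ∃ n, ∏ i ∈ Finset.range n, a i = 0

end Ideal

namespace Submodule

variable {R M : Type*} [CommRing R] [AddCommGroup M] [Module R M] {J : Ideal R} {N : Submodule R M}

theorem exists_mul_smul_notMem_of_sup_smul_top_eq_top (hN : N ⊔ J • ⊤ = ⊤) {c : R} {m : M}
    (hcm : c • m ∉ N) : ∃ a ∈ J, ∃ m' : M, (a * c) • m' ∉ N := by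
  by_contra! H
  have : ⊤ ≤ N.comap (LinearMap.lsmul R M c) := by
    rw [← hN]
    refine sup_le (fun n hn => N.smul_mem c hn) (smul_le.mpr fun a ha m' _ => ?_)
    simpa [smul_smul, mul_comm] using H a ha m'
  exact hcm (this trivial)

theorem eq_top_of_sup_smul_top_eq_top (hJ : J.IsTNilpotent) (hN : N ⊔ J • ⊤ = ⊤) : N = ⊤ := by
  by_contra hne
  obtain ⟨x, hx⟩ := (SetLike.lt_iff_le_and_exists.mp (lt_top_iff_ne_top.mpr hne)).2
  -- Greedily extend a product `(a₀ ⋯ aₙ₋₁) • mₙ ∉ N` with factors in `J`.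
  choose a haJ m' hm' using fun p : {p : R × M // p.1 • p.2 ∉ N} =>
    exists_mul_smul_notMem_of_sup_smul_top_eq_top hN p.2
  let seq : ℕ → {p : R × M // p.1 • p.2 ∉ N} := fun n =>
    Nat.rec ⟨(1, x), by simpa using hx.2⟩ (fun _ p => ⟨(a p * p.1.1, m' p), hm' p⟩) n
  have hseq : ∀ n, (seq n).1.1 = ∏ i ∈ Finset.range n, a (seq i) := by
    intro n
    induction n with
    | zero => rfl
    | succ n ih => rw [Finset.prod_range_succ, ← ih, mul_comm]
  obtain ⟨n, hn⟩ := hJ (fun i => a (seq i)) fun i => haJ _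
  exact (seq n).2 (by rw [hseq, hn, zero_smul]; exact N.zero_mem)

end Submodule

namespace IsProjectiveCover

variable {R : Type u} [CommRing R] {P M : Type u} [AddCommGroup P] [Module R P]
  [AddCommGroup M] [Module R M] {c : P →ₗ[R] M}

theorem of_ker_le_smul_top {J : Ideal R} (hJ : J.IsTNilpotent) (hP : Module.Projective R P)
    (hc : Function.Surjective c) (hker : LinearMap.ker c ≤ J • ⊤) : IsProjectiveCover R c :=
  ⟨hP, hc, fun N hN => Submodule.eq_top_of_sup_smul_top_eq_top hJ
    (top_unique (hN ▸ sup_le_sup_left hker N))⟩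

variable (hc : IsProjectiveCover R c)
include hc

theorem surjective_of_surjective_comp {Q : Type*} [AddCommGroup Q] [Module R Q]
    {g : Q →ₗ[R] P} (hg : Function.Surjective (c ∘ₗ g)) : Function.Surjective g := by
  rw [← LinearMap.range_eq_top]
  refine hc.2.2 _ (eq_top_iff.mpr fun p _ => ?_)
  obtain ⟨q, hq⟩ := hg (c p)
  exact Submodule.mem_sup.mpr ⟨g q, ⟨q, rfl⟩, p - g q, by simp [← hq], by abel⟩

theorem injective_of_comp_eq {β : P →ₗ[R] P} (hβ : c ∘ₗ β = c) : Function.Injective β := by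
  have := hc.1
  obtain ⟨t, ht⟩ := Module.projective_lifting_property β LinearMap.id
    (hc.surjective_of_surjective_comp (by rw [hβ]; exact hc.2.1))
  have hts : Function.Surjective t := hc.surjective_of_surjective_comp <| by
    rw [← hβ, LinearMap.comp_assoc, ht, LinearMap.comp_id]
    exact hc.2.1
  intro x y hxy
  obtain ⟨x, rfl⟩ := hts x
  obtain ⟨y, rfl⟩ := hts y
  simpa [← LinearMap.comp_apply, ht] using congrArg t hxy

/-- Bass: a flat module with a projective cover is projective. Flatness is used in Villamayor's
form: every relation is fixed by an endomorphism of the free module with values in the relations. -/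
theorem projective_of_locallySplit {F : Type u} [AddCommGroup F] [Module R F]
    [Module.Projective R F] {π : F →ₗ[R] M} (hπ : Function.Surjective π)
    (hsplit : ∀ w ∈ LinearMap.ker π,
      ∃ θ : F →ₗ[R] F, LinearMap.range θ ≤ LinearMap.ker π ∧ θ w = w) :
    Module.Projective R M := by
  have := hc.1
  obtain ⟨h, hh⟩ := Module.projective_lifting_property c π hc.2.1
  obtain ⟨s, hs⟩ := Module.projective_lifting_property h LinearMap.id
    (hc.surjective_of_surjective_comp (hh ▸ hπ))
  have hinj : Function.Injective c := by
    rw [injective_iff_map_eq_zero]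
    intro p hp
    obtain ⟨θ, hθ, hθp⟩ := hsplit (s p) (by
      rw [LinearMap.mem_ker, ← hh, LinearMap.comp_apply, ← LinearMap.comp_apply h s, hs]
      exact hp)
    -- `h ∘ θ ∘ s` fixes `p` and lands in `ker c`, so `id - h ∘ θ ∘ s` is injective and kills `p`.
    have hα : c ∘ₗ (LinearMap.id - h ∘ₗ θ ∘ₗ s) = c := by
      ext q
      have : π (θ (s q)) = 0 := hθ ⟨s q, rfl⟩
      simp [← hh ▸ this]
    refine hc.injective_of_comp_eq hα ?_
    simp [hθp, ← LinearMap.comp_apply h s, hs]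
  exact Module.Projective.of_equiv (LinearEquiv.ofBijective c ⟨hinj, hc.2.1⟩)

end IsProjectiveCover

def PrincipalIdealDCC (R : Type*) [CommRing R] : Prop :=
  ∀ f : ℕ → R, (∀ n, Ideal.span {f (n + 1)} ≤ Ideal.span {f n}) →
    ∃ n, ∀ m, n ≤ m → Ideal.span {f m} = Ideal.span {f n}

section ChainRelations

variable {R : Type*} [CommRing R] (r : ℕ → R)

/-- The relations `eₙ = rₙ • eₙ₊₁` presenting the direct limit of `R → R → ⋯` along the
multiplications by `r n`. -/
noncomputable def chainRel (n : ℕ) : ℕ →₀ R :=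
  Finsupp.single n 1 - r n • Finsupp.single (n + 1) 1

/-- `chainTail r k n = eₙ - (rₙ ⋯ rₙ₊ₖ₋₁) • eₙ₊ₖ`, written as a combination of relations. -/
noncomputable def chainTail : ℕ → ℕ → (ℕ →₀ R)
  | 0, _ => 0
  | k + 1, n => chainRel r n + r n • chainTail k (n + 1)

theorem chainTail_mem_span (k n : ℕ) :
    chainTail r k n ∈ Submodule.span R (Set.range (chainRel r)) := by
  induction k generalizing n with
  | zero => exact Submodule.zero_mem _
  | succ k ih =>
    exact Submodule.add_mem _ (Submodule.subset_span ⟨n, rfl⟩) (Submodule.smul_mem _ _ (ih _))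

noncomputable def chainTruncation (N : ℕ) : (ℕ →₀ R) →ₗ[R] (ℕ →₀ R) :=
  Finsupp.linearCombination R fun n => chainTail r (N - n) n

theorem chainTruncation_chainRel {N n : ℕ} (h : n < N) :
    chainTruncation r N (chainRel r n) = chainRel r n := by
  obtain ⟨k, hk⟩ : ∃ k, N - n = k + 1 := ⟨N - (n + 1), by omega⟩
  have hk' : N - (n + 1) = k := by omega
  simp only [chainTruncation, chainRel, map_sub, map_smul, Finsupp.linearCombination_single,
    one_smul, hk, hk', chainTail]
  abel

theorem range_chainTruncation_le (N : ℕ) :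
    LinearMap.range (chainTruncation r N) ≤ Submodule.span R (Set.range (chainRel r)) := by
  rw [chainTruncation, Finsupp.range_linearCombination, Submodule.span_le]
  rintro _ ⟨n, rfl⟩
  exact chainTail_mem_span r _ _

noncomputable def chainCoord : ℕ → (ℕ →₀ R) →ₗ[R] R
  | 0 => Finsupp.lapply 0
  | m + 1 => Finsupp.lapply (m + 1) + r m • chainCoord m

theorem chainCoord_chainRel (m k : ℕ) :
    chainCoord r m (chainRel r k) = if k = m then 1 else 0 := by
  induction m with
  | zero => simp [chainCoord, chainRel, Finsupp.single_apply]
  | succ m ih =>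
    rw [chainCoord, LinearMap.add_apply, LinearMap.smul_apply, ih]
    simp only [chainRel, Finsupp.lapply_apply, Finsupp.coe_sub, Finsupp.coe_smul, Pi.sub_apply,
      Pi.smul_apply, Finsupp.single_apply, smul_eq_mul]
    split_ifs <;> first | omega | simp_all

theorem exists_mem_span_chainRel_lt {w : ℕ →₀ R}
    (hw : w ∈ Submodule.span R (Set.range (chainRel r))) :
    ∃ N, w ∈ Submodule.span R (chainRel r '' Set.Iio N) := by
  have hrange : Set.range (chainRel r) = ⋃ N, chainRel r '' Set.Iio N := by
    ext w
    simp only [Set.mem_range, Set.mem_iUnion, Set.mem_image, Set.mem_Iio]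
    exact ⟨fun ⟨n, h⟩ => ⟨n + 1, n, lt_add_one n, h⟩, fun ⟨_, n, _, h⟩ => ⟨n, h⟩⟩
  rw [hrange, Submodule.span_iUnion] at hw
  exact (Submodule.mem_iSup_of_directed _ (Monotone.directed_le fun _ _ h =>
    Submodule.span_mono (Set.image_mono (Set.Iio_subset_Iio h)))).mp hw

theorem exists_chainTruncation_eq {w : ℕ →₀ R}
    (hw : w ∈ Submodule.span R (Set.range (chainRel r))) :
    ∃ N, chainTruncation r N w = w := by
  obtain ⟨N, hN⟩ := exists_mem_span_chainRel_lt r hw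
  refine ⟨N, LinearMap.eqOn_span' (g := LinearMap.id) ?_ hN⟩
  rintro _ ⟨n, hn, rfl⟩
  exact chainTruncation_chainRel r hn

theorem exists_chainCoord_eq_zero {w : ℕ →₀ R}
    (hw : w ∈ Submodule.span R (Set.range (chainRel r))) :
    ∃ N, ∀ m, N ≤ m → chainCoord r m w = 0 := by
  obtain ⟨N, hN⟩ := exists_mem_span_chainRel_lt r hw
  refine ⟨N, fun m hm => (Submodule.span_le (p := LinearMap.ker (chainCoord r m)).mpr ?_ hN :)⟩
  rintro _ ⟨n, hn, rfl⟩
  simp [chainCoord_chainRel, (show n ≠ m by simp at hn; omega)]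

theorem exists_dvd_of_retraction {f : ℕ → R} (hrf : ∀ n, r n * f n = f (n + 1))
    {ρ : (ℕ →₀ R) →ₗ[R] (ℕ →₀ R)}
    (hρ : LinearMap.range ρ ≤ Submodule.span R (Set.range (chainRel r)))
    (hρr : ∀ n, ρ (chainRel r n) = chainRel r n) :
    ∃ N, ∀ m, N ≤ m → f (m + 1) ∣ f m := by
  let c n m := chainCoord r m (ρ (Finsupp.single n 1))
  have hrel : ∀ n m, c n m - r n * c (n + 1) m = if n = m then 1 else 0 := by
    intro n m
    rw [← chainCoord_chainRel r m n, ← hρr n, chainRel, map_sub, map_smul, map_sub, map_smul,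
      smul_eq_mul]
  obtain ⟨N, hN⟩ := exists_chainCoord_eq_zero r (hρ ⟨Finsupp.single 0 1, rfl⟩)
  refine ⟨N, fun m hm => ⟨-c (m + 1) m, ?_⟩⟩
  have hstep : ∀ n, c n m * f n - c (n + 1) m * f (n + 1) = if n = m then f m else 0 := by
    intro n
    calc _ = (c n m - r n * c (n + 1) m) * f n := by rw [← hrf]; ring
      _ = _ := by rw [hrel]; split_ifs with h <;> simp [h]
  -- Telescoping the relations from `0` to `m` and using `c 0 m = 0`.
  have htel := Finset.sum_range_sub' (fun n => c n m * f n) (m + 1)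
  simp only [hstep, Finset.sum_ite_eq', Finset.mem_range, lt_add_one, if_true] at htel
  have hc0 : c 0 m = 0 := hN m hm
  rw [hc0, zero_mul] at htel
  linear_combination htel

theorem span_singleton_eq_of_forall_dvd_succ {f : ℕ → R}
    (hf : ∀ n, Ideal.span {f (n + 1)} ≤ Ideal.span {f n}) {N : ℕ} (hN : ∀ m, N ≤ m → f (m + 1) ∣ f m) :
    ∀ m, N ≤ m → Ideal.span {f m} = Ideal.span {f N} := by
  refine Nat.le_induction rfl fun m hm ih => ?_
  rw [← ih]
  exact le_antisymm (hf m) (Ideal.span_singleton_le_span_singleton.mpr (hN m hm))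

end ChainRelations

theorem principalIdealDCC_of_isPerfectRing {R : Type u} [CommRing R] (hR : IsPerfectRing R) :
    PrincipalIdealDCC R := by
  intro f hf
  choose r hr using fun n => Ideal.mem_span_singleton'.mp (hf n (Ideal.mem_span_singleton_self _))
  let G := Submodule.span R (Set.range (chainRel r))
  obtain ⟨P, _, _, c, hc⟩ := hR ((ℕ →₀ R) ⧸ G) inferInstance inferInstance
  have : Module.Projective R ((ℕ →₀ R) ⧸ G) :=
    hc.projective_of_locallySplit G.mkQ_surjective fun w hw => by
      rw [Submodule.ker_mkQ] at hw ⊢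
      obtain ⟨N, hN⟩ := exists_chainTruncation_eq r hw
      exact ⟨_, range_chainTruncation_le r N, hN⟩
  obtain ⟨t, ht⟩ := Module.projective_lifting_property G.mkQ LinearMap.id G.mkQ_surjective
  have hmkt : ∀ x, G.mkQ (t x) = x := LinearMap.congr_fun ht
  let ρ : (ℕ →₀ R) →ₗ[R] (ℕ →₀ R) := LinearMap.id - t ∘ₗ G.mkQ
  have hρ : LinearMap.range ρ ≤ G := by
    rintro _ ⟨v, rfl⟩
    refine (Submodule.Quotient.mk_eq_zero G).mp ?_
    change G.mkQ (v - t (G.mkQ v)) = 0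
    rw [map_sub, hmkt, sub_self]
  have hρr : ∀ n, ρ (chainRel r n) = chainRel r n := fun n => by
    change chainRel r n - t (G.mkQ (chainRel r n)) = chainRel r n
    rw [Submodule.mkQ_apply, (Submodule.Quotient.mk_eq_zero G).mpr
      (Submodule.subset_span ⟨n, rfl⟩), map_zero, sub_zero]
  obtain ⟨N, hN⟩ := exists_dvd_of_retraction r hr hρ hρr
  exact ⟨N, span_singleton_eq_of_forall_dvd_succ hf hN⟩

namespace PrincipalIdealDCC

variable {R : Type*} [CommRing R] (hR : PrincipalIdealDCC R)
include hR

theorem wellFounded : WellFounded fun a b : R => Ideal.span {a} < Ideal.span {b} := by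
  rw [wellFounded_iff_isEmpty_descending_chain]
  refine ⟨fun ⟨f, hf⟩ => ?_⟩
  obtain ⟨n, hn⟩ := hR f fun n => (hf n).le
  exact (hf n).ne (hn (n + 1) n.le_succ)

theorem isTNilpotent_jacobson : (⊥ : Ideal R).jacobson.IsTNilpotent := by
  intro a ha
  let c n := ∏ i ∈ Finset.range n, a i
  obtain ⟨N, hN⟩ := hR c fun n => Ideal.span_singleton_le_span_singleton.mpr
    ⟨a n, Finset.prod_range_succ a n⟩
  obtain ⟨t, ht⟩ := Ideal.mem_span_singleton'.mp
    ((hN (N + 1) N.le_succ).symm ▸ Ideal.mem_span_singleton_self (c N))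
  obtain ⟨u, hu⟩ := Ideal.mem_jacobson_bot.mp (ha N) (-t)
  refine ⟨N, ?_⟩
  -- `c N = t * a N * c N` with `1 - t * a N` a unit.
  have h : c N * (a N * -t + 1) = 0 := by
    rw [show c (N + 1) = c N * a N from Finset.prod_range_succ a N] at ht
    linear_combination -ht
  exact (Units.mul_left_eq_zero u).mp (hu ▸ h)

/-- Fitting's lemma, with `f = t * x ^ n` where `x ^ n = t * x ^ (2 * n)`. -/
theorem exists_isIdempotentElem (x : R) :
    ∃ f, IsIdempotentElem f ∧ x ∣ f ∧ ∃ n, x ^ n = f * x ^ n := by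
  obtain ⟨N, hN⟩ := hR (x ^ ·) fun n =>
    Ideal.span_singleton_le_span_singleton.mpr (pow_dvd_pow x n.le_succ)
  obtain ⟨t, ht⟩ := Ideal.mem_span_singleton'.mp
    (show x ^ (N + 1) ∈ Ideal.span {x ^ (N + 1 + (N + 1))} by
      rw [hN _ (by omega), ← hN (N + 1) N.le_succ]
      exact Ideal.mem_span_singleton_self _)
  rw [pow_add] at ht
  refine ⟨t * x ^ (N + 1), ?_, Dvd.dvd.mul_left (dvd_pow_self x N.succ_ne_zero) t, N + 1, ?_⟩
  · rw [IsIdempotentElem]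
    calc t * x ^ (N + 1) * (t * x ^ (N + 1)) = t * (t * (x ^ (N + 1) * x ^ (N + 1))) := by ring
      _ = _ := by rw [ht]
  · calc x ^ (N + 1) = t * (x ^ (N + 1) * x ^ (N + 1)) := ht.symm
      _ = _ := by ring

end PrincipalIdealDCC

section LocalIdempotents

variable {R : Type*} [CommRing R]

/-- `e` is idempotent and every element of the corner `e • R` is nilpotent or generates it, so that
`e • R` is zero or a local ring. -/
def IsLocalIdempotent (e : R) : Prop :=
  IsIdempotentElem e ∧ ∀ a, IsNilpotent (a * e) ∨ ∃ b, a * e * b = e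

theorem IsLocalIdempotent.exists_mul_eq_of_notMem_jacobson {e c : R} (he : IsLocalIdempotent e)
    (hce : c * e = c) (hc : c ∉ (⊥ : Ideal R).jacobson) : ∃ b, c * b = e := by
  rcases he.2 c with hnil | hb
  · obtain ⟨n, hn⟩ := hnil
    exact absurd (Ideal.isRadical_jacobson ⊥ ⟨n, by rw [← hce, hn]; exact Submodule.zero_mem _⟩) hc
  · simpa [hce] using hb

theorem span_singleton_lt_of_isIdempotentElem {e f : R} (hf : IsIdempotentElem f) (hfe : f * e = f)
    (hne : f ≠ e) : Ideal.span {f} < Ideal.span {e} := by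
  refine lt_of_le_not_ge (Ideal.span_singleton_le_span_singleton.mpr ⟨f, by rw [mul_comm, hfe]⟩)
    fun h => hne ?_
  obtain ⟨c, rfl⟩ := Ideal.span_singleton_le_span_singleton.mp h
  calc f = f * (f * c) := hfe.symm
    _ = f * c := by rw [← mul_assoc, hf.eq]

theorem PrincipalIdealDCC.exists_list_isLocalIdempotent (hR : PrincipalIdealDCC R) {e : R}
    (he : IsIdempotentElem e) : ∃ l : List R, (∀ x ∈ l, IsLocalIdempotent x) ∧ l.sum = e := by
  induction e using hR.wellFounded.induction with
  | _ e ih =>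
  by_cases hloc : ∀ a, IsNilpotent (a * e) ∨ ∃ b, a * e * b = e
  · exact ⟨[e], by simpa using ⟨he, hloc⟩, by simp⟩
  push Not at hloc
  obtain ⟨a, hnil, hdvd⟩ := hloc
  -- Fitting's idempotent of `a * e` splits `e` into two strictly smaller idempotents.
  obtain ⟨f, hf, ⟨b, rfl⟩, n, hn⟩ := hR.exists_isIdempotentElem (a * e)
  have hfe : a * e * b * e = a * e * b := by
    rw [mul_right_comm, mul_assoc a, he.eq]
  have hf0 : a * e * b ≠ 0 := fun h => hnil ⟨n, by rw [hn, h, zero_mul]⟩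
  have hfne : a * e * b ≠ e := hdvd b
  have hg : IsIdempotentElem (e - a * e * b) := hf.sub he hfe (by rw [mul_comm, hfe])
  obtain ⟨l₁, hl₁, hs₁⟩ := ih _ (span_singleton_lt_of_isIdempotentElem hf hfe hfne) hf
  obtain ⟨l₂, hl₂, hs₂⟩ := ih _ (span_singleton_lt_of_isIdempotentElem hg
    (by rw [sub_mul, he.eq, hfe]) (by simpa using hf0)) hg
  refine ⟨l₁ ++ l₂, fun x hx => ?_, by rw [List.sum_append, hs₁, hs₂, add_sub_cancel]⟩
  rcases List.mem_append.mp hx with hx | hx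
  exacts [hl₁ x hx, hl₂ x hx]

end LocalIdempotents

section Corner

variable {R X : Type*} [CommRing R] (u : X → R)

/-- `⨁ₓ u x • R`, as a submodule of `X →₀ R`. -/
def cornerSubmodule : Submodule R (X →₀ R) where
  carrier := {v | ∀ x, v x * u x = v x}
  add_mem' hv hw x := by simp [add_mul, hv x, hw x]
  zero_mem' := by simp
  smul_mem' c v hv x := by simp [mul_assoc, hv x]

variable {u}

theorem single_mem_cornerSubmodule (hu : ∀ x, IsIdempotentElem (u x)) (x : X) :
    Finsupp.single x (u x) ∈ cornerSubmodule u := fun y => by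
  by_cases h : x = y
  · subst h; simp [(hu x).eq]
  · simp [h]

theorem projective_cornerSubmodule (hu : ∀ x, IsIdempotentElem (u x)) :
    Module.Projective R (cornerSubmodule u) := by
  let π := Finsupp.linearCombination R fun x => Finsupp.single x (u x)
  have hπ : ∀ v x, π v x = v x * u x := fun v x => by
    rw [Finsupp.linearCombination_apply, Finsupp.sum_apply, Finsupp.sum, Finset.sum_eq_single x]
    · simp
    · intro y _ hyx; simp [hyx]
    · intro hx; simp [Finsupp.notMem_support_iff.mp hx]
  refine Module.Projective.of_split (cornerSubmodule u).subtype
    (π.codRestrict _ fun v x => by rw [hπ, mul_assoc, (hu x).eq]) ?_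
  ext v : 1
  exact Subtype.ext (Finsupp.ext fun x => (hπ v x).trans (v.2 x))

theorem mem_smul_top_of_forall_apply_mem {J : Ideal R} (hu : ∀ x, IsIdempotentElem (u x))
    {v : X →₀ R} (hv : v ∈ cornerSubmodule u) (hJ : ∀ x, v x ∈ J) :
    (⟨v, hv⟩ : cornerSubmodule u) ∈ J • (⊤ : Submodule R (cornerSubmodule u)) := by
  have : (⟨v, hv⟩ : cornerSubmodule u) =
      ∑ x ∈ v.support, v x • ⟨_, single_mem_cornerSubmodule hu x⟩ := by
    ext y
    simp only [Submodule.coe_sum, Submodule.coe_smul, Finsupp.coe_finsetSum, Finset.sum_apply,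
      Finsupp.smul_apply, smul_eq_mul]
    rw [Finset.sum_eq_single y (fun x _ hxy => by simp [hxy]) (fun hy => by simp_all)]
    simp [hv y]
  rw [this]
  exact Submodule.sum_mem _ fun x _ => Submodule.smul_mem_smul (hJ x) trivial

end Corner

section Cover

variable {R : Type u} [CommRing R] {ι : Type} (e : ι → R) (M : Type u)

/-- The module `⨁_{(m, i) ∈ A} e i • R`. -/
noncomputable def coverSubmodule (A : Set (M × ι)) : Submodule R (M × ι →₀ R) :=
  cornerSubmodule (A.indicator fun x => e x.2)

variable {e M} in
theorem mem_coverSubmodule {A : Set (M × ι)} {v : M × ι →₀ R} :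
    v ∈ coverSubmodule e M A ↔ ↑v.support ⊆ A ∧ ∀ x, v x * e x.2 = v x := by
  constructor
  · intro hv
    have hzero : ∀ x ∉ A, v x = 0 := fun x hxA => by
      simpa [Set.indicator_of_notMem hxA] using (hv x).symm
    refine ⟨fun x hx => by_contra fun hxA => Finsupp.mem_support_iff.mp hx (hzero x hxA),
      fun x => ?_⟩
    by_cases hxA : x ∈ A
    · simpa [Set.indicator_of_mem hxA] using hv x
    · simp [hzero x hxA]
  rintro ⟨hsupp, hv⟩ x
  by_cases hxA : x ∈ A
  · simpa [Set.indicator_of_mem hxA] using hv x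
  · have : v x = 0 := Finsupp.notMem_support_iff.mp fun h => hxA (hsupp h)
    simp [this]

variable {e M} in
theorem single_mem_coverSubmodule {A : Set (M × ι)} {x : M × ι} (hx : x ∈ A)
    (he : IsIdempotentElem (e x.2)) : Finsupp.single x (e x.2) ∈ coverSubmodule e M A := by
  refine mem_coverSubmodule.mpr
    ⟨(Finset.coe_subset.mpr Finsupp.support_single_subset).trans (by simpa using hx), fun y => ?_⟩
  by_cases h : x = y
  · subst h; simp [he.eq]
  · simp [h]

variable [AddCommGroup M] [Module R M]

noncomputable def idempotentCombination : (M × ι →₀ R) →ₗ[R] M :=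
  Finsupp.linearCombination R fun x => e x.2 • x.1

def IsJacobsonIndependent (A : Set (M × ι)) : Prop :=
  ∀ v ∈ coverSubmodule e M A,
    idempotentCombination e M v ∈ (⊥ : Ideal R).jacobson • (⊤ : Submodule R M) →
      ∀ x, v x ∈ (⊥ : Ideal R).jacobson

variable {e M}

theorem isJacobsonIndependent_empty : IsJacobsonIndependent e M ∅ := by
  intro v hv _ x
  have : v = 0 := Finsupp.support_eq_empty.mp
    (Finset.coe_eq_empty.mp (Set.subset_empty_iff.mp (mem_coverSubmodule.mp hv).1))
  simp [this]

theorem exists_maximal_isJacobsonIndependent :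
    ∃ A, Maximal (IsJacobsonIndependent e M) A := by
  have hchains : ∀ c ⊆ {A | IsJacobsonIndependent e M A}, IsChain (· ⊆ ·) c → c.Nonempty →
      ∃ ub ∈ {A | IsJacobsonIndependent e M A}, ∀ s ∈ c, s ⊆ ub := by
    refine fun c hc hchain hne => ⟨⋃₀ c, fun v hv hcomb => ?_, fun _ => Set.subset_sUnion_of_mem⟩
    -- A finitely supported `v` over the union of a chain lives over one member of the chain.
    rw [mem_coverSubmodule, Set.sUnion_eq_biUnion] at hv
    obtain ⟨B, hBc, hB⟩ := hchain.directedOn.exists_mem_subset_of_finset_subset_biUnion hne hv.1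
    exact hc hBc v (mem_coverSubmodule.mpr ⟨hB, hv.2⟩) hcomb
  obtain ⟨A, -, hA⟩ := zorn_subset_nonempty _ hchains ∅ isJacobsonIndependent_empty
  exact ⟨A, hA⟩

theorem IsJacobsonIndependent.insert {A : Set (M × ι)} (hA : IsJacobsonIndependent e M A)
    (he : ∀ i, IsLocalIdempotent (e i)) {x : M × ι}
    (hx : e x.2 • x.1 ∉ (coverSubmodule e M A).map (idempotentCombination e M) ⊔
      (⊥ : Ideal R).jacobson • ⊤) :
    IsJacobsonIndependent e M (insert x A) := by
  classical
  intro v hv hcomb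
  obtain ⟨hsupp, hve⟩ := mem_coverSubmodule.mp hv
  have hv' : v.erase x ∈ coverSubmodule e M A := by
    refine mem_coverSubmodule.mpr ⟨fun y hy => ?_, fun y => ?_⟩
    · rw [Finset.mem_coe, Finsupp.support_erase, Finset.mem_erase] at hy
      exact (Set.mem_insert_iff.mp (hsupp hy.2)).resolve_left hy.1
    · by_cases hy : y = x
      · simp [hy]
      · simp [Finsupp.erase_ne hy, hve y]
  have hsplit : idempotentCombination e M v =
      idempotentCombination e M (v.erase x) + v x • e x.2 • x.1 := by
    conv_lhs => rw [← Finsupp.erase_add_single x v]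
    simp [idempotentCombination]
  by_cases hc : v x ∈ (⊥ : Ideal R).jacobson
  · have hcomb' := hA _ hv' (by
      rw [eq_sub_of_add_eq hsplit.symm]
      exact Submodule.sub_mem _ hcomb (Submodule.smul_mem_smul hc trivial))
    intro y
    by_cases hy : y = x
    · rwa [hy]
    · simpa [Finsupp.erase_ne hy] using hcomb' y
  · exfalso
    -- `v x` generates the corner `e x.2 • R`, so `e x.2 • x.1 ∈ R • (v x • e x.2 • x.1)`.
    obtain ⟨b, hb⟩ := (he x.2).exists_mul_eq_of_notMem_jacobson (hve x) hc
    refine hx ?_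
    have hmem : v x • e x.2 • x.1 ∈ (coverSubmodule e M A).map (idempotentCombination e M) ⊔
        (⊥ : Ideal R).jacobson • ⊤ := by
      rw [eq_sub_of_add_eq' hsplit.symm]
      exact Submodule.sub_mem _ (Submodule.mem_sup_right hcomb)
        (Submodule.mem_sup_left ⟨_, hv', rfl⟩)
    convert Submodule.smul_mem _ b hmem using 1
    rw [smul_smul, smul_smul, mul_comm b, hb, (he x.2).1.eq]

theorem map_sup_smul_top_eq_top_of_maximal [Fintype ι] (he : ∀ i, IsLocalIdempotent (e i))
    (hsum : ∑ i, e i = 1) {A : Set (M × ι)} (hA : Maximal (IsJacobsonIndependent e M) A) :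
    (coverSubmodule e M A).map (idempotentCombination e M) ⊔ (⊥ : Ideal R).jacobson • ⊤ = ⊤ := by
  refine eq_top_iff.mpr fun y _ => ?_
  rw [← one_smul R y, ← hsum, Finset.sum_smul]
  refine Submodule.sum_mem _ fun i _ => by_contra fun hy => ?_
  have hyA : (y, i) ∉ A := fun hyA => hy <| Submodule.mem_sup_left
    ⟨_, single_mem_coverSubmodule hyA (he i).1, by
      simp [idempotentCombination, smul_smul, (he i).1.eq]⟩
  exact hyA (hA.2 (hA.1.insert he hy) (Set.subset_insert _ _) (Set.mem_insert _ _))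

theorem exists_isProjectiveCover_of_isLocalIdempotent [Fintype ι]
    (hJ : (⊥ : Ideal R).jacobson.IsTNilpotent) (he : ∀ i, IsLocalIdempotent (e i))
    (hsum : ∑ i, e i = 1) :
    ∃ (P : Type u) (_ : AddCommGroup P) (_ : Module R P) (f : P →ₗ[R] M),
      IsProjectiveCover R f := by
  obtain ⟨A, hA⟩ := exists_maximal_isJacobsonIndependent (e := e) (M := M)
  have hidem : ∀ x, IsIdempotentElem (A.indicator (fun x : M × ι => e x.2) x) := fun x => by
    by_cases hx : x ∈ A
    · simpa [Set.indicator_of_mem hx] using (he x.2).1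
    · simp [Set.indicator_of_notMem hx, IsIdempotentElem]
  let f := (idempotentCombination e M).domRestrict (coverSubmodule e M A)
  have hf : Function.Surjective f := by
    rw [← LinearMap.range_eq_top, LinearMap.range_domRestrict]
    exact Submodule.eq_top_of_sup_smul_top_eq_top hJ (map_sup_smul_top_eq_top_of_maximal he hsum hA)
  refine ⟨coverSubmodule e M A, inferInstance, inferInstance, f,
    .of_ker_le_smul_top hJ (projective_cornerSubmodule hidem) hf ?_⟩
  rintro ⟨v, hv⟩ hfv
  refine mem_smul_top_of_forall_apply_mem hidem hv (hA.1 v hv ?_)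
  rw [LinearMap.mem_ker] at hfv
  change idempotentCombination e M v = 0 at hfv
  rw [hfv]
  exact Submodule.zero_mem _

end Cover

theorem isPerfectRing_of_principalIdealDCC {R : Type u} [CommRing R] (hR : PrincipalIdealDCC R) :
    IsPerfectRing R := by
  obtain ⟨l, hl, hsum⟩ := hR.exists_list_isLocalIdempotent IsIdempotentElem.one
  intro M _ _
  refine exists_isProjectiveCover_of_isLocalIdempotent (e := fun i : Fin l.length => l[(i : ℕ)])
    hR.isTNilpotent_jacobson (fun i => hl _ (List.getElem_mem _)) ?_
  rw [Fin.sum_univ_getElem, hsum]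

/-- A commutative ring is perfect iff it satisfies the descending chain condition
on principal ideals. -/
theorem isPerfectRing_iff_dcc_principal (R : Type u) [CommRing R] :
    IsPerfectRing R ↔
      ∀ f : ℕ → R, (∀ n, Ideal.span {f (n + 1)} ≤ Ideal.span {f n}) →
        ∃ n, ∀ m, n ≤ m → Ideal.span {f m} = Ideal.span {f n} :=
  ⟨principalIdealDCC_of_isPerfectRing, isPerfectRing_of_principalIdealDCC⟩
end

section
/- If R is a commutative perfect ring, then every nonzero R-module has a maximal submodule, i.e., rad(M) = ⋂{L : L maximal submodule of M} is a proper submodule of M for every nonzero M. -/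
universe u

/-!
A projective cover `f : P → M` has a superfluous kernel, which therefore lies in every maximal
submodule of `P`; so maximal submodules of `P` descend to `M`, and it suffices that a nonzero
projective module `P` has one. If it had none, every functional `P → R` would take values in the
Jacobson radical `J`. Writing a nonzero `p` through a dual basis of `P` gives an endomorphism `e` of
a finitely generated submodule `N ∋ p` with `e p = p` and `e N ≤ J • N`; by Nakayama `1 - e` is
surjective, hence injective (Vasconcelos), so `p = 0`.
-/

open Submodule

namespace LinearMap

variable {R M : Type*} [CommRing R] [AddCommGroup M] [Module R M]

theorem eq_zero_of_apply_eq_self_of_range_le_jacobson_smul [Module.Finite R M]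
    (φ : Module.End R M) (hφ : range φ ≤ Ring.jacobson R • ⊤) {x : M} (hx : φ x = x) :
    x = 0 := by
  have hsurj : range (LinearMap.id - φ) = ⊤ := by
    refine top_le_iff.mp (le_of_le_smul_of_le_jacobson_bot
      Module.Finite.fg_top Ideal.jacobson_bot.ge fun y _ ↦ ?_)
    rw [← sub_add_cancel y (φ y)]
    exact add_mem_sup (mem_range_self (LinearMap.id - φ) y) (hφ (mem_range_self φ y))
  refine OrzechProperty.injective_of_surjective_endomorphism _ (range_eq_top.mp hsurj) ?_
  simp [hx]

end LinearMap

namespace Module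

variable {R P M : Type*} [CommRing R] [AddCommGroup P] [Module R P] [AddCommGroup M] [Module R M]

theorem Projective.jacobson_ne_top [Module.Projective R P] [Nontrivial P] :
    jacobson R P ≠ ⊤ := by
  intro htop
  obtain ⟨s, hs⟩ := projective_def.mp ‹Projective R P›
  obtain ⟨p, hp⟩ := exists_ne (0 : P)
  have hcoord (q : P) (x : P) : s q x ∈ Ring.jacobson R :=
    map_jacobson_le (Finsupp.lapply x ∘ₗ s) (htop ▸ mem_map_of_mem trivial)
  set B := (s p).support
  let e : P →ₗ[R] P := ∑ x ∈ B, (Finsupp.lapply x ∘ₗ s).smulRight x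
  have he_apply (q : P) : e q = ∑ x ∈ B, s q x • x := by simp [e]
  have he (q : P) : e q ∈ Ring.jacobson R • span R (B : Set P) := by
    rw [he_apply]
    exact sum_mem fun x hx ↦ smul_mem_smul (hcoord q x) (subset_span hx)
  have hep : e p = p := by
    conv_rhs => rw [← hs p]
    rw [he_apply, Finsupp.linearCombination_apply, Finsupp.sum]
    rfl
  have hpB : p ∈ span R (B : Set P) := hep ▸ smul_le_right (he p)
  have := LinearMap.eq_zero_of_apply_eq_self_of_range_le_jacobson_smul
    (e.restrict fun q _ ↦ smul_le_right (he q)) ?_ (x := ⟨p, hpB⟩) (Subtype.ext hep)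
  · exact hp (congrArg Subtype.val this)
  · rintro _ ⟨q, rfl⟩
    exact (mem_smul_top_iff _ _ _).mpr (he q)

theorem jacobson_eq_top_of_surjective_of_superfluous_ker {f : P →ₗ[R] M}
    (hf : Function.Surjective f) (hker : ∀ N : Submodule R P, N ⊔ LinearMap.ker f = ⊤ → N = ⊤)
    (hM : jacobson R M = ⊤) : jacobson R P = ⊤ := by
  have hle : LinearMap.ker f ≤ jacobson R P := le_sInf fun N hN ↦ by
    by_contra h
    exact hN.1 (hker N (hN.2 _ (left_lt_sup.mpr h)))
  rw [← comap_jacobson_of_ker_le hf hle, hM, comap_top]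

end Module

/-- Over a commutative perfect ring, every nonzero module has a maximal submodule;
equivalently its radical (the intersection of all maximal submodules, `⊤` if there
are none) is a proper submodule. -/
theorem rad_ne_top_of_perfect (R : Type u) [CommRing R] (hR : IsPerfectRing R)
    (M : Type u) [AddCommGroup M] [Module R M] (hM : Nontrivial M) :
    sInf {L : Submodule R M | IsCoatom L} ≠ ⊤ := by
  obtain ⟨P, _, _, f, hproj, hsurj, hker⟩ := hR M ‹_› ‹_›
  have : Module.Projective R P := hproj
  have : Nontrivial P := hsurj.nontrivial
  exact fun hrad ↦ Module.Projective.jacobson_ne_top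
    (Module.jacobson_eq_top_of_surjective_of_superfluous_ker hsurj hker hrad)
end

section
/- Let R be an almost perfect domain with Q ≠ R. An R-module M is divisible if and only if M has no maximal submodules (i.e., rad(M) = M), if and only if mM = M for every maximal ideal m of R. -/
universe u

open CategoryTheory Limits

/-- `InjDimLE R n M` : the injective dimension of `M` is at most `n`. -/
def InjDimLE (R : Type u) [CommRing R] : ℕ → ModuleCat.{u} R → Prop
  | 0, M => Injective M
  | n + 1, M => ∃ (E : ModuleCat.{u} R) (f : M ⟶ E),
      Mono f ∧ Injective E ∧ InjDimLE R n (cokernel f)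

/-- `ProjDimLE R n M` : the projective dimension of `M` is at most `n`. -/
def ProjDimLE (R : Type u) [CommRing R] : ℕ → ModuleCat.{u} R → Prop
  | 0, M => Projective M
  | n + 1, M => ∃ (P : ModuleCat.{u} R) (f : P ⟶ M),
      Epi f ∧ Projective P ∧ ProjDimLE R n (kernel f)

/-- `FlatDimLE R n M` : the flat (weak) dimension of `M` is at most `n`. -/
def FlatDimLE (R : Type u) [CommRing R] : ℕ → ModuleCat.{u} R → Prop
  | 0, M => Module.Flat R M
  | n + 1, M => ∃ (P : ModuleCat.{u} R) (f : P ⟶ M),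
      Epi f ∧ Module.Flat R P ∧ FlatDimLE R n (kernel f)

/-- An `R`-module is divisible if `rM = M` for every nonzero `r : R`. -/
def IsDivisibleModule (R : Type u) [CommRing R] (M : Type u) [AddCommGroup M] [Module R M] :
    Prop :=
  ∀ r : R, r ≠ 0 → ∀ m : M, ∃ x : M, r • x = m

/-!
Over any commutative ring, `M` has no maximal submodules iff `mM = M` for every maximal ideal `m`:
a maximal submodule `L` has `M/L ≅ R/m`, so `mM ≤ L`; and if `mM ≠ M`, the `R/m`-vector space
`M/mM` has a hyperplane. A divisible module has `mM = M` since a maximal ideal of a domain that is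
not a field contains some `r ≠ 0`. Conversely, if `M` has no maximal submodules, neither has
`N = M/rM` as a module over the perfect ring `R/rR`, nor, since its kernel is superfluous, the
projective cover `P → N`. By Bass's argument such a `P` is zero: a fixed point of an endomorphism
of a free module with values in the radical lies in a finite free summand, and on that summand
`1 - h`, for the compressed endomorphism `h`, is surjective by Nakayama, hence injective.
So `N = 0`, that is `rM = M`.
-/

open Submodule

section Radical

variable {S : Type*} [CommRing S]

theorem LinearMap.injective_id_sub_of_range_le_jacobson {N : Type*} [AddCommGroup N]
    [Module S N] [Module.Finite S N] (h : N →ₗ[S] N)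
    (hh : LinearMap.range h ≤ Module.jacobson S N) :
    Function.Injective (LinearMap.id - h : N →ₗ[S] N) := by
  set g : N →ₗ[S] N := LinearMap.id - h
  refine OrzechProperty.injective_of_surjective_endomorphism g (LinearMap.range_eq_top.mp ?_)
  by_contra hne
  obtain ⟨L, hL, hgL⟩ := (eq_top_or_exists_le_coatom (LinearMap.range g)).resolve_left hne
  have hhL : LinearMap.range h ≤ L :=
    hh.trans (sInf_le (show L ∈ {K : Submodule S N | IsCoatom K} from hL))
  refine hL.1 (eq_top_iff'.mpr fun x => ?_)
  have hx : x = g x + h x := by simp [g]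
  rw [hx]
  exact L.add_mem (hgL (LinearMap.mem_range_self g x)) (hhL (LinearMap.mem_range_self h x))

theorem Module.eq_zero_of_apply_eq_self_of_retraction {N F : Type*} [AddCommGroup N]
    [Module S N] [Module.Finite S N] [AddCommGroup F] [Module S F] {i : N →ₗ[S] F}
    {q : F →ₗ[S] N} (hqi : q ∘ₗ i = LinearMap.id) {e : F →ₗ[S] F}
    (he : LinearMap.range e ≤ Module.jacobson S F) {n : N} (hn : e (i n) = i n) : n = 0 := by
  have hrange : LinearMap.range (q ∘ₗ e ∘ₗ i) ≤ Module.jacobson S N := by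
    rintro _ ⟨n', rfl⟩
    exact Module.map_jacobson_le q (mem_map_of_mem (he (LinearMap.mem_range_self e (i n'))))
  refine LinearMap.injective_id_sub_of_range_le_jacobson _ hrange ?_
  have hqin : q (i n) = n := LinearMap.congr_fun hqi n
  simp [hn, hqin]

theorem Finsupp.eq_zero_of_apply_eq_self_of_range_le_jacobson {ι : Type*}
    {e : (ι →₀ S) →ₗ[S] (ι →₀ S)}
    (he : LinearMap.range e ≤ Module.jacobson S (ι →₀ S)) {y : ι →₀ S} (hy : e y = y) :
    y = 0 := by
  classical
  set T : Set ι := ↑y.support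
  have : Module.Finite S (supported S S T) := Module.Finite.equiv (supportedEquivFinsupp T).symm
  have hyT : y ∈ supported S S T := (mem_supported S y).mpr subset_rfl
  have h0 := Module.eq_zero_of_apply_eq_self_of_retraction (N := supported S S T)
    (restrictDom_comp_subtype T) he (n := ⟨y, hyT⟩) hy
  simpa using congrArg Subtype.val h0

theorem Module.Projective.subsingleton_of_forall_not_isCoatom {P : Type*} [AddCommGroup P]
    [Module S P] [Module.Projective S P] (hP : ∀ L : Submodule S P, ¬ IsCoatom L) :
    Subsingleton P := by
  obtain ⟨s, hs⟩ := Module.projective_def'.mp ‹Module.Projective S P›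
  have hrad : Module.jacobson S P = ⊤ := sInf_eq_top.mpr fun L hL => (hP L hL).elim
  have hrange : LinearMap.range (s ∘ₗ Finsupp.linearCombination S id) ≤
      Module.jacobson S (P →₀ S) := by
    refine (LinearMap.range_comp_le_range _ _).trans ?_
    rw [LinearMap.range_eq_map, ← hrad]
    exact Module.map_jacobson_le s
  refine subsingleton_of_forall_eq 0 fun p => ?_
  have hsp : s p = 0 := Finsupp.eq_zero_of_apply_eq_self_of_range_le_jacobson hrange
    (congrArg s (LinearMap.congr_fun hs p))
  simpa [hsp] using (LinearMap.congr_fun hs p).symm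

theorem forall_not_isCoatom_of_surjective_of_sup_ker_eq_top {P N : Type*} [AddCommGroup P]
    [Module S P] [AddCommGroup N] [Module S N] {f : P →ₗ[S] N} (hf : Function.Surjective f)
    (hker : ∀ L : Submodule S P, L ⊔ LinearMap.ker f = ⊤ → L = ⊤)
    (hN : ∀ K : Submodule S N, ¬ IsCoatom K) (L : Submodule S P) : ¬ IsCoatom L := by
  intro hL
  by_cases hle : LinearMap.ker f ≤ L
  · exact hN _ (isCoatom_map_of_ker_le hf hle hL)
  · exact hL.1 (hker L (hL.2 _ (left_lt_sup.mpr hle)))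

end Radical

theorem IsProjectiveCover.subsingleton {S : Type u} [CommRing S] {P N : Type u}
    [AddCommGroup P] [Module S P] [AddCommGroup N] [Module S N] {f : P →ₗ[S] N}
    (hf : IsProjectiveCover S f) (hN : ∀ K : Submodule S N, ¬ IsCoatom K) : Subsingleton N := by
  obtain ⟨hproj, hsurj, hker⟩ := hf
  have := Module.Projective.subsingleton_of_forall_not_isCoatom
    (forall_not_isCoatom_of_surjective_of_sup_ker_eq_top hsurj hker hN)
  exact hsurj.subsingleton

section QuotientSmulTop

variable {R M : Type*} [CommRing R] [AddCommGroup M] [Module R M]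

theorem forall_not_isCoatom_quotient_smul_top (hM : ∀ L : Submodule R M, ¬ IsCoatom L)
    (I : Ideal R) (K : Submodule (R ⧸ I) (M ⧸ I • (⊤ : Submodule R M))) :
    ¬ IsCoatom K := by
  let g : M →ₛₗ[Ideal.Quotient.mk I] M ⧸ I • (⊤ : Submodule R M) :=
    (Module.isTorsionBySet_quotient_ideal_smul M I).semilinearMap.comp (mkQ _)
  exact fun hK => hM _ ((isCoatom_comap_iff (f := g) (mkQ_surjective _)).mpr hK)

theorem forall_not_isCoatom_iff_forall_isMaximal_smul_top_eq_top :
    (∀ L : Submodule R M, ¬ IsCoatom L) ↔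
      ∀ m : Ideal R, m.IsMaximal → m • (⊤ : Submodule R M) = ⊤ := by
  constructor
  · intro hM m hm
    by_contra hne
    have : Nontrivial (M ⧸ m • (⊤ : Submodule R M)) := Quotient.nontrivial_iff.mpr hne
    let := Ideal.Quotient.field m
    obtain ⟨K, hK, -⟩ := (eq_top_or_exists_le_coatom
      (⊥ : Submodule (R ⧸ m) (M ⧸ m • (⊤ : Submodule R M)))).resolve_left bot_ne_top
    exact forall_not_isCoatom_quotient_smul_top hM m K hK
  · intro hM L hL
    have : IsSimpleModule R (M ⧸ L) := isSimpleModule_iff_isCoatom.mpr hL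
    have hann : Module.annihilator R (M ⧸ L) • (⊤ : Submodule R M) ≤ L :=
      smul_le.mpr fun a ha x _ =>
        (Quotient.mk_eq_zero L).mp (Module.mem_annihilator.mp ha (Submodule.Quotient.mk x))
    rw [hM _ (IsSimpleModule.annihilator_isMaximal (M := M ⧸ L))] at hann
    exact hL.1 (top_le_iff.mp hann)

end QuotientSmulTop

theorem IsDivisibleModule.isMaximal_smul_top_eq_top {R M : Type u} [CommRing R]
    [AddCommGroup M] [Module R M] (hM : IsDivisibleModule R M) (hR : ¬ IsField R)
    (m : Ideal R) (hm : m.IsMaximal) : m • (⊤ : Submodule R M) = ⊤ := by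
  have : Nontrivial R := (Ideal.Quotient.mk_surjective (I := m)).nontrivial
  obtain ⟨r, hrm, hr⟩ := exists_mem_ne_zero_of_ne_bot (Ideal.bot_lt_of_maximal m hR).ne'
  refine eq_top_iff'.mpr fun x => ?_
  obtain ⟨y, rfl⟩ := hM r hr x
  exact smul_mem_smul hrm mem_top

open Pointwise in
theorem IsAPD.isDivisibleModule_of_forall_not_isCoatom {R M : Type u} [CommRing R] [IsDomain R]
    (hR : IsAPD R) [AddCommGroup M] [Module R M] (hM : ∀ L : Submodule R M, ¬ IsCoatom L) :
    IsDivisibleModule R M := by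
  intro r hr x
  let I : Ideal R := Ideal.span {r}
  have hI : I ≠ ⊥ := by simpa [I, Ideal.span_singleton_eq_bot] using hr
  obtain ⟨P, _, _, f, hf⟩ := hR I hI (M ⧸ I • (⊤ : Submodule R M)) _ _
  have := hf.subsingleton (forall_not_isCoatom_quotient_smul_top hM I)
  have hx : x ∈ r • (⊤ : Submodule R M) := by
    rw [← ideal_span_singleton_smul, ← Quotient.mk_eq_zero]
    exact Subsingleton.elim _ _
  obtain ⟨y, -, hy⟩ := (mem_smul_pointwise_iff_exists _ _ _).mp hx
  exact ⟨y, hy⟩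

/-- Over an almost perfect domain that is not a field, a module `M` is divisible iff it
has no maximal submodules (i.e. `rad M = M`) iff `mM = M` for every maximal ideal `m`. -/
theorem divisible_iff_no_maximal_submodule_iff_smul_maximal (R : Type u) [CommRing R]
    [IsDomain R] (hR : IsAPD R) (hQ : ¬ IsField R)
    (M : Type u) [AddCommGroup M] [Module R M] :
    (IsDivisibleModule R M ↔ ∀ L : Submodule R M, ¬ IsCoatom L) ∧
    (IsDivisibleModule R M ↔
      ∀ m : Ideal R, m.IsMaximal → m • (⊤ : Submodule R M) = ⊤) := by
  have hcoatom := forall_not_isCoatom_iff_forall_isMaximal_smul_top_eq_top (R := R) (M := M)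
  have hdiv : IsDivisibleModule R M ↔
      ∀ m : Ideal R, m.IsMaximal → m • (⊤ : Submodule R M) = ⊤ :=
    ⟨fun hM => hM.isMaximal_smul_top_eq_top hQ,
      fun hM => hR.isDivisibleModule_of_forall_not_isCoatom (hcoatom.mpr hM)⟩
  exact ⟨hdiv.trans hcoatom.symm, hdiv⟩
end

section
/- Let R be an h-local domain with field of fractions Q, X a set of maximal ideals of R, X' its complement in Max(R), R_(X) := ⋂_{m ∈ X} R_m and R_(X') := ⋂_{m ∈ X'} R_m (each intersection taken inside Q, and equal to Q if the index set is empty). Then Q/R = R_(X)/R ⊕ R_(X')/R as internal direct sum of R-submodules of Q/R. -/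
universe u

/-- An integral domain is `h`-local if every proper quotient is semilocal and every
quotient by a nonzero prime is local. -/
def IsHLocal (R : Type u) [CommRing R] [IsDomain R] : Prop :=
  (∀ I : Ideal R, I ≠ ⊥ → {m : Ideal (R ⧸ I) | m.IsMaximal}.Finite) ∧
  (∀ P : Ideal R, P ≠ ⊥ → P.IsPrime → IsLocalRing (R ⧸ P))

/-- The localization `R_m` at a maximal ideal `m`, viewed as an `R`-submodule of the
fraction field `K`. -/
noncomputable def locAt (R K : Type u) [CommRing R] [IsDomain R] [Field K] [Algebra R K]
    [IsFractionRing R K] (m : Ideal R) (hm : m.IsMaximal) : Submodule R K :=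
  haveI := hm.isPrime
  Subalgebra.toSubmodule (Localization.subalgebra K m.primeCompl
    (fun x hx => mem_nonZeroDivisors_of_ne_zero (fun h => hx (h ▸ m.zero_mem))))

/-- `R_(X) = ⋂_{m ∈ X} R_m ⊆ K` (equal to `K = Q` when `X = ∅`). -/
noncomputable def locInt (R K : Type u) [CommRing R] [IsDomain R] [Field K] [Algebra R K]
    [IsFractionRing R K] (X : Set (Ideal R)) (hX : ∀ m ∈ X, m.IsMaximal) :
    Submodule R K :=
  ⨅ m : X, locAt R K m.1 (hX m.1 m.2)

/-- The copy of `R` inside its fraction field `K`, as an `R`-submodule. -/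
noncomputable def ringInK (R K : Type u) [CommRing R] [IsDomain R] [Field K] [Algebra R K]
    [IsFractionRing R K] : Submodule R K :=
  LinearMap.range (Algebra.linearMap R K)

/-!
Since `R = ⋂_m R_m`, we get `R_(X) ∩ R_(X') = R`, so the sum is direct. For `R_(X) + R_(X') = Q`,
fix `q ∈ Q` and let `D_m = {r ∈ R | r q ∈ R_m}`, a nonzero ideal saturated with respect to `m`.
If `D_m` were contained in a maximal ideal `m' ≠ m`, then `D_m` would be disjoint from the
multiplicative set `(R ∖ m)(R ∖ m')`, so some prime `P ⊇ D_m` would lie in `m ∩ m'`; this is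
impossible as `R/P` is local. Hence the `D_m` are pairwise comaximal, and only finitely many are
proper, since `q ∈ R_m` unless `m` contains a denominator of `q`. Writing `1 = x + y` with
`x ∈ ⋂_{m ∈ X} D_m` and `y ∈ ⋂_{m ∉ X} D_m` (finite intersections) gives
`q = x q + y q ∈ R_(X) + R_(X')`.
-/

theorem Submodule.map_mkQ_inf_map_mkQ_eq_bot {R M : Type*} [Ring R] [AddCommGroup M]
    [Module R M] {N A B : Submodule R M} (hNA : N ≤ A) (hAB : A ⊓ B ≤ N) :
    A.map N.mkQ ⊓ B.map N.mkQ = ⊥ := by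
  apply Submodule.comap_injective_of_surjective N.mkQ_surjective
  rw [Submodule.comap_inf, Submodule.comap_map_mkQ, Submodule.comap_map_mkQ, Submodule.comap_bot,
    Submodule.ker_mkQ, sup_eq_right.2 hNA, inf_comm, sup_inf_assoc_of_le B hNA, inf_comm]
  exact sup_eq_left.2 hAB

section LocalizationsAsSubmodules

variable {R K : Type u} [CommRing R] [IsDomain R] [Field K] [Algebra R K] [IsFractionRing R K]

theorem mul_mem_locAt {m : Ideal R} (hm : m.IsMaximal) {x y : K}
    (hx : x ∈ locAt R K m hm) (hy : y ∈ locAt R K m hm) : x * y ∈ locAt R K m hm :=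
  have := hm.isPrime
  Subalgebra.mul_mem _ hx hy

theorem inv_algebraMap_mem_locAt {m : Ideal R} (hm : m.IsMaximal) {s : R} (hs : s ∉ m) :
    (algebraMap R K s)⁻¹ ∈ locAt R K m hm :=
  ⟨1, s, hs, by rw [IsFractionRing.mk'_eq_div, map_one, one_div]⟩

theorem ringInK_le_locAt {m : Ideal R} (hm : m.IsMaximal) : ringInK R K ≤ locAt R K m hm := by
  have := hm.isPrime
  rintro _ ⟨r, rfl⟩
  exact Subalgebra.algebraMap_mem _ r

theorem ringInK_le_locInt (X : Set (Ideal R)) (hX : ∀ m ∈ X, m.IsMaximal) :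
    ringInK R K ≤ locInt R K X hX :=
  le_iInf fun _ => ringInK_le_locAt _

theorem iInf_locAt_eq_ringInK :
    ⨅ v : MaximalSpectrum R, locAt R K v.asIdeal v.isMaximal = ringInK R K := by
  simp_rw [locAt, ← Localization.subalgebra.ofField_eq, ← Algebra.iInf_toSubmodule,
    MaximalSpectrum.iInf_localization_eq_bot, Algebra.toSubmodule_bot, Submodule.one_eq_range]
  rfl

theorem locInt_inf_locInt_compl (X : Set (Ideal R)) (hX : ∀ m ∈ X, m.IsMaximal) :
    locInt R K X hX ⊓ locInt R K {m | m.IsMaximal ∧ m ∉ X} (fun _ h => h.1) = ringInK R K := by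
  refine le_antisymm ?_ (le_inf (ringInK_le_locInt _ _) (ringInK_le_locInt _ _))
  rw [← iInf_locAt_eq_ringInK]
  refine le_iInf fun v => ?_
  by_cases hv : v.asIdeal ∈ X
  · exact inf_le_left.trans (iInf_le _ (⟨v.asIdeal, hv⟩ : X))
  · exact inf_le_right.trans
      (iInf_le _ (⟨v.asIdeal, v.isMaximal, hv⟩ : {m : Ideal R | m.IsMaximal ∧ m ∉ X}))

end LocalizationsAsSubmodules

section HLocal

variable {R : Type u} [CommRing R] [IsDomain R]

theorem IsHLocal.eq_of_prime_le (hR : IsHLocal R) {P m m' : Ideal R} [P.IsPrime] (hP : P ≠ ⊥)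
    [m.IsMaximal] [m'.IsMaximal] (hPm : P ≤ m) (hPm' : P ≤ m') : m = m' := by
  have := hR.2 P hP ‹_›
  have key : ∀ n : Ideal R, [n.IsMaximal] → P ≤ n →
      n = (IsLocalRing.maximalIdeal (R ⧸ P)).comap (Ideal.Quotient.mk P) := fun n _ hPn => by
    have : (n.map (Ideal.Quotient.mk P)).IsMaximal :=
      Ideal.IsMaximal.map_of_surjective_of_ker_le Ideal.Quotient.mk_surjective
        (by rwa [Ideal.mk_ker])
    rw [← IsLocalRing.eq_maximalIdeal this, Ideal.comap_map_mk hPn]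
  rw [key m hPm, key m' hPm']

theorem IsHLocal.not_le_of_saturated (hR : IsHLocal R) {I m m' : Ideal R} (hI : I ≠ ⊥)
    [m.IsMaximal] [m'.IsMaximal] (hne : m ≠ m') (hsat : ∀ s ∉ m, ∀ r, s * r ∈ I → r ∈ I) :
    ¬ I ≤ m' := by
  intro hle
  have hdisj : Disjoint (I : Set R) ↑(m.primeCompl ⊔ m'.primeCompl) := by
    refine Set.disjoint_left.2 fun x hxI hx => ?_
    obtain ⟨s, hs, t, ht, rfl⟩ := Submonoid.mem_sup.1 hx
    exact ht (hle (hsat s hs t hxI))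
  obtain ⟨P, hP, hIP, hPdisj⟩ := Ideal.exists_le_prime_disjoint _ _ hdisj
  have hPle : ∀ (n : Ideal R) [n.IsPrime], n.primeCompl ≤ m.primeCompl ⊔ m'.primeCompl → P ≤ n :=
    fun n _ hn x hxP => by_contra fun hxn => Set.disjoint_left.1 hPdisj hxP (hn hxn)
  exact hne (hR.eq_of_prime_le (ne_bot_of_le_ne_bot hI hIP) (hPle m le_sup_left)
    (hPle m' le_sup_right))

theorem IsHLocal.finite_setOf_le_asIdeal (hR : IsHLocal R) {I : Ideal R} (hI : I ≠ ⊥) :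
    {v : MaximalSpectrum R | I ≤ v.asIdeal}.Finite := by
  refine Set.Finite.of_finite_image (f := fun v => v.asIdeal.map (Ideal.Quotient.mk I))
    ((hR.1 I hI).subset ?_) fun v hv w hw h => MaximalSpectrum.ext ?_
  · rintro _ ⟨v, hv, rfl⟩
    exact Ideal.IsMaximal.map_of_surjective_of_ker_le Ideal.Quotient.mk_surjective
      (by rwa [Ideal.mk_ker])
  · rw [← Ideal.comap_map_mk hv, ← Ideal.comap_map_mk hw]
    exact congrArg _ h

end HLocal

section LocalDenominators

variable {R K : Type u} [CommRing R] [IsDomain R] [Field K] [Algebra R K] [IsFractionRing R K]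

noncomputable def locDenom (v : MaximalSpectrum R) (q : K) : Ideal R :=
  (locAt R K v.asIdeal v.isMaximal).comap (LinearMap.toSpanSingleton R K q)

theorem mem_locDenom {v : MaximalSpectrum R} {q : K} {r : R} :
    r ∈ locDenom v q ↔ r • q ∈ locAt R K v.asIdeal v.isMaximal :=
  Iff.rfl

theorem mem_locDenom_of_mul_mem {v : MaximalSpectrum R} {q : K} {s r : R} (hs : s ∉ v.asIdeal)
    (h : s * r ∈ locDenom v q) : r ∈ locDenom v q := by
  have hs0 : algebraMap R K s ≠ 0 :=
    (map_ne_zero_iff _ (IsFractionRing.injective R K)).2 fun h => hs (h ▸ v.asIdeal.zero_mem)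
  have := mul_mem_locAt v.isMaximal (inv_algebraMap_mem_locAt v.isMaximal hs) (mem_locDenom.1 h)
  rwa [mul_smul, Algebra.smul_def s, ← mul_assoc, inv_mul_cancel₀ hs0, one_mul] at this

theorem exists_ne_zero_smul_mem_ringInK (q : K) : ∃ b : R, b ≠ 0 ∧ b • q ∈ ringInK R K := by
  obtain ⟨a, b, hb, rfl⟩ := IsFractionRing.div_surjective R q
  refine ⟨b, nonZeroDivisors.ne_zero hb, a, ?_⟩
  rw [Algebra.smul_def,
    mul_div_cancel₀ _ (IsFractionRing.to_map_ne_zero_of_mem_nonZeroDivisors hb)]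
  rfl

theorem locDenom_ne_bot (v : MaximalSpectrum R) (q : K) : locDenom v q ≠ ⊥ := by
  obtain ⟨b, hb0, hb⟩ := exists_ne_zero_smul_mem_ringInK (R := R) q
  exact fun h => hb0 ((Submodule.eq_bot_iff _).1 h b (ringInK_le_locAt v.isMaximal hb))

theorem IsHLocal.finite_setOf_notMem_locAt (hR : IsHLocal R) (q : K) :
    {v : MaximalSpectrum R | q ∉ locAt R K v.asIdeal v.isMaximal}.Finite := by
  obtain ⟨b, hb0, hb⟩ := exists_ne_zero_smul_mem_ringInK (R := R) q
  refine (hR.finite_setOf_le_asIdeal (I := Ideal.span {b}) (by simpa using hb0)).subset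
    fun v hv => (Ideal.span_singleton_le_iff_mem _).2 (by_contra fun hbv => hv ?_)
  have hbq : b * 1 ∈ locDenom v q := by
    rw [mul_one]
    exact ringInK_le_locAt v.isMaximal hb
  simpa using mem_locDenom.1 (mem_locDenom_of_mul_mem hbv hbq)

theorem IsHLocal.isCoprime_locDenom (hR : IsHLocal R) {v w : MaximalSpectrum R} (hvw : v ≠ w)
    (q : K) : IsCoprime (locDenom v q) (locDenom w q) := by
  rw [Ideal.isCoprime_iff_sup_eq]
  by_contra hne
  obtain ⟨p, hp, hle⟩ := Ideal.exists_le_maximal _ hne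
  have key : ∀ u : MaximalSpectrum R, locDenom u q ≤ p → u.asIdeal = p := fun u hu =>
    by_contra fun hup => hR.not_le_of_saturated (locDenom_ne_bot u q) hup
      (fun _ hs _ => mem_locDenom_of_mul_mem hs) hu
  exact hvw (MaximalSpectrum.ext
    ((key v (le_sup_left.trans hle)).trans (key w (le_sup_right.trans hle)).symm))

theorem smul_mem_locInt {X : Set (Ideal R)} (hX : ∀ m ∈ X, m.IsMaximal) {q : K}
    {T : Finset (MaximalSpectrum R)} {x : R} (hx : x ∈ ⨅ v ∈ T, locDenom v q)
    (hT : ∀ v : MaximalSpectrum R, v.asIdeal ∈ X → q ∉ locAt R K v.asIdeal v.isMaximal → v ∈ T) :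
    x • q ∈ locInt R K X hX := by
  refine (Submodule.mem_iInf _).2 fun ⟨m, hm⟩ => ?_
  by_cases hq : q ∈ locAt R K m (hX m hm)
  · exact Submodule.smul_mem _ x hq
  · exact (Submodule.mem_iInf _).1 ((Submodule.mem_iInf _).1 hx ⟨m, hX m hm⟩) (hT _ hm hq)

theorem IsHLocal.locInt_sup_locInt_compl (hR : IsHLocal R) (X : Set (Ideal R))
    (hX : ∀ m ∈ X, m.IsMaximal) :
    locInt R K X hX ⊔ locInt R K {m | m.IsMaximal ∧ m ∉ X} (fun _ h => h.1) = ⊤ := by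
  classical
  refine eq_top_iff.2 fun q _ => ?_
  set S := (hR.finite_setOf_notMem_locAt q).toFinset
  have hcop : IsCoprime (⨅ v ∈ S.filter (·.asIdeal ∈ X), locDenom v q)
      (⨅ w ∈ S.filter (·.asIdeal ∉ X), locDenom w q) :=
    Ideal.isCoprime_biInf fun w hw => (Ideal.isCoprime_biInf fun v hv =>
      hR.isCoprime_locDenom (fun h : w = v => (Finset.mem_filter.1 hw).2
        (h ▸ (Finset.mem_filter.1 hv).2)) q).symm
  obtain ⟨x, hx, y, hy, hxy⟩ := Ideal.isCoprime_iff_exists.1 hcop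
  rw [← one_smul R q, ← hxy, add_smul]
  exact Submodule.add_mem_sup
    (smul_mem_locInt hX hx fun v hv hq => Finset.mem_filter.2 ⟨by simpa [S] using hq, hv⟩)
    (smul_mem_locInt _ hy fun v hv hq => Finset.mem_filter.2 ⟨by simpa [S] using hq, hv.2⟩)

end LocalDenominators

/-- For an `h`-local domain `R` with fraction field `K = Q` and a set `X` of maximal
ideals with complement `X'` in `Max(R)`, the module `Q/R` is the internal direct sum of
`R_(X)/R` and `R_(X')/R`. -/
theorem hLocal_quotient_direct_sum (R K : Type u) [CommRing R] [IsDomain R] [Field K]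
    [Algebra R K] [IsFractionRing R K] (hR : IsHLocal R)
    (X : Set (Ideal R)) (hX : ∀ m ∈ X, m.IsMaximal)
    (M₁ M₂ : Submodule R (K ⧸ ringInK R K))
    (hM₁ : M₁ = (locInt R K X hX).map (ringInK R K).mkQ)
    (hM₂ : M₂ = (locInt R K {m | m.IsMaximal ∧ m ∉ X} (fun _ h => h.1)).map
      (ringInK R K).mkQ) :
    M₁ ⊓ M₂ = ⊥ ∧ M₁ ⊔ M₂ = ⊤ := by
  subst hM₁ hM₂
  refine ⟨Submodule.map_mkQ_inf_map_mkQ_eq_bot (ringInK_le_locInt X hX)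
    (locInt_inf_locInt_compl X hX).le, ?_⟩
  rw [← Submodule.map_sup, hR.locInt_sup_locInt_compl X hX, Submodule.map_top,
    Submodule.range_mkQ]
end

section
/- Let R be an h-local domain, X a set of maximal ideals of R, and M₁ := R_(X)/R ⊆ Q/R where R_(X) = ⋂_{m∈X} R_m. Then M₁ is a restriction submodule of Q/R: for every maximal ideal m' of R, the localization (M₁)_{m'} equals 0 if m' ∈ X, and equals (Q/R)_{m'} = Q/R_{m'} if m' ∉ X. -/
universe u

/-! In an h-local domain no nonzero prime lies in two distinct maximal ideals, so for
`m ≠ m'` and `b ≠ 0` the multiplicative set `(R ∖ m')(R ∖ m)` meets `bR`: some `s ∉ m'`,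
`t ∉ m` have `st ∈ bR`, and then `s` moves any `k` with `bk ∈ R` into `R_m`. Only finitely
many maximal ideals contain `b`, and `k ∈ R_n` for all the others, so for `m' ∉ X` a finite
product of such `s` moves `k` into `R_(X)`. For `m' ∈ X` we have `R_(X) ⊆ R_{m'}`, whose
elements are moved into `R` by some `s ∉ m'`. -/

namespace Ideal

variable {R : Type*} [CommRing R]

theorem eq_of_le_of_le_of_isLocalRing_quotient {P m m' : Ideal R} [IsLocalRing (R ⧸ P)]
    [m.IsMaximal] [m'.IsMaximal] (hm : P ≤ m) (hm' : P ≤ m') : m = m' := by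
  have hmax {n : Ideal R} [n.IsMaximal] (hn : P ≤ n) : (n.map (Quotient.mk P)).IsMaximal :=
    IsMaximal.map_of_surjective_of_ker_le Quotient.mk_surjective (by rwa [mk_ker])
  rw [← comap_map_mk hm, ← comap_map_mk hm', IsLocalRing.eq_maximalIdeal (hmax hm),
    IsLocalRing.eq_maximalIdeal (hmax hm')]

theorem finite_setOf_isMaximal_le (I : Ideal R)
    (h : {m : Ideal (R ⧸ I) | m.IsMaximal}.Finite) :
    {m : Ideal R | m.IsMaximal ∧ I ≤ m}.Finite :=
  (h.image (comap (Quotient.mk I))).subset fun m ⟨_, hIm⟩ =>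
    ⟨m.map (Quotient.mk I),
      IsMaximal.map_of_surjective_of_ker_le Quotient.mk_surjective (by rwa [mk_ker]),
      comap_map_mk hIm⟩

end Ideal

theorem Submodule.exists_smul_mem_iInf_of_finite {R M ι : Type*} [CommSemiring R]
    [AddCommMonoid M] [Module R M] (S : Submonoid R) (N : ι → Submodule R M) {x : M}
    (hfin : {i | x ∉ N i}.Finite) (h : ∀ i, ∃ s ∈ S, s • x ∈ N i) :
    ∃ s ∈ S, s • x ∈ ⨅ i, N i := by
  classical
  choose f hfS hfN using h
  refine ⟨∏ i ∈ hfin.toFinset, f i, prod_mem fun i _ => hfS i, mem_iInf _ |>.2 fun i => ?_⟩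
  by_cases hi : i ∈ hfin.toFinset
  · rw [← Finset.mul_prod_erase _ _ hi, mul_comm, mul_smul]
    exact smul_mem _ _ (hfN i)
  · exact smul_mem _ _ (not_not.1 (mt hfin.mem_toFinset.2 hi))

namespace IsHLocal

variable {R : Type u} [CommRing R] [IsDomain R]

theorem finite_setOf_isMaximal_le (hR : IsHLocal R) {I : Ideal R} (hI : I ≠ ⊥) :
    {m : Ideal R | m.IsMaximal ∧ I ≤ m}.Finite :=
  I.finite_setOf_isMaximal_le (hR.1 I hI)

theorem exists_mul_mem_span_singleton (hR : IsHLocal R) {m m' : Ideal R} [m.IsMaximal]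
    [m'.IsMaximal] (hne : m ≠ m') {b : R} (hb : b ≠ 0) :
    ∃ s ∉ m', ∃ t ∉ m, s * t ∈ Ideal.span {b} := by
  by_contra! h
  have hdisj :
      Disjoint (Ideal.span {b} : Set R) (m'.primeCompl ⊔ m.primeCompl : Submonoid R) := by
    refine Set.disjoint_right.2 fun x hx => ?_
    obtain ⟨s, hs, t, ht, rfl⟩ := Submonoid.mem_sup.1 hx
    exact h s hs t ht
  obtain ⟨P, hP, hbP, hPdisj⟩ := Ideal.exists_le_prime_disjoint _ _ hdisj
  have hP0 : P ≠ ⊥ := fun h0 => hb (by simpa [h0] using hbP (Ideal.mem_span_singleton_self b))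
  have hPle {n : Ideal R} (hn : ∀ x ∉ n, x ∈ m'.primeCompl ⊔ m.primeCompl) : P ≤ n :=
    fun x hxP => not_not.1 fun hxn => Set.disjoint_left.1 hPdisj hxP (hn x hxn)
  have := hR.2 P hP0 hP
  exact hne (Ideal.eq_of_le_of_le_of_isLocalRing_quotient
    (hPle fun _ hx => Submonoid.mem_sup_right hx) (hPle fun _ hx => Submonoid.mem_sup_left hx))

end IsHLocal

section FractionField

variable {R K : Type u} [CommRing R] [IsDomain R] [Field K] [Algebra R K] [IsFractionRing R K]

theorem mem_locAt_iff {m : Ideal R} (hm : m.IsMaximal) {x : K} :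
    x ∈ locAt R K m hm ↔ ∃ s ∉ m, s • x ∈ ringInK R K := by
  have := hm.isPrime
  constructor
  · rintro ⟨a, s, hs, rfl⟩
    refine ⟨s, hs, a, ?_⟩
    rw [Algebra.smul_def, mul_comm]
    exact (IsLocalization.mk'_spec K a _).symm
  · rintro ⟨s, hs, a, ha⟩
    refine ⟨a, s, hs, IsLocalization.eq_mk'_iff_mul_eq.2 ?_⟩
    simpa [Algebra.smul_def, mul_comm] using ha.symm

theorem IsHLocal.exists_smul_mem_locAt (hR : IsHLocal R) {n m' : Ideal R} (hn : n.IsMaximal)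
    [m'.IsMaximal] (hne : n ≠ m') {b : R} (hb : b ≠ 0) {k : K} (hbk : b • k ∈ ringInK R K) :
    ∃ s ∉ m', s • k ∈ locAt R K n hn := by
  obtain ⟨s, hs, t, ht, hst⟩ := hR.exists_mul_mem_span_singleton hne hb
  obtain ⟨r, hr⟩ := Ideal.mem_span_singleton'.1 hst
  refine ⟨s, hs, (mem_locAt_iff hn).2 ⟨t, ht, ?_⟩⟩
  have : t • s • k = r • b • k := by rw [smul_smul, smul_smul, mul_comm t, ← hr]
  exact this ▸ Submodule.smul_mem _ r hbk

end FractionField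

/-- For an `h`-local domain `R`, the submodule `M₁ = R_(X)/R ⊆ Q/R` is a restriction
submodule: its localization at a maximal ideal `m'` is `0` when `m' ∈ X` (every element
of `M₁` is killed by some `s ∉ m'`) and is all of `(Q/R)_{m'}` when `m' ∉ X` (every
element of `Q/R` is brought into `M₁` by some `s ∉ m'`). -/
theorem hLocal_restriction_submodule (R K : Type u) [CommRing R] [IsDomain R] [Field K]
    [Algebra R K] [IsFractionRing R K] (hR : IsHLocal R)
    (X : Set (Ideal R)) (hX : ∀ m ∈ X, m.IsMaximal)
    (M₁ : Submodule R (K ⧸ ringInK R K))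
    (hM₁ : M₁ = (locInt R K X hX).map (ringInK R K).mkQ)
    (m' : Ideal R) (hm' : m'.IsMaximal) :
    (m' ∈ X → ∀ x ∈ M₁, ∃ s ∉ m', s • x = 0) ∧
    (m' ∉ X → ∀ y : K ⧸ ringInK R K, ∃ s ∉ m', s • y ∈ M₁) := by
  subst hM₁
  constructor
  · rintro hm'X _ ⟨q, hq, rfl⟩
    obtain ⟨s, hs, hsq⟩ := (mem_locAt_iff hm').1 ((Submodule.mem_iInf _).1 hq ⟨m', hm'X⟩)
    exact ⟨s, hs, by rwa [← map_smul, Submodule.mkQ_apply, Submodule.Quotient.mk_eq_zero]⟩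
  · intro hm'X y
    obtain ⟨k, rfl⟩ := (ringInK R K).mkQ_surjective y
    obtain ⟨⟨b, hb⟩, a, hbk⟩ := IsLocalization.exists_integer_multiple (nonZeroDivisors R) k
    have hbk : b • k ∈ ringInK R K := ⟨a, hbk⟩
    have hb0 : b ≠ 0 := nonZeroDivisors.ne_zero hb
    have hb_mem (n : X) (hkn : k ∉ locAt R K n.1 (hX n.1 n.2)) : Ideal.span {b} ≤ n.1 :=
      (Ideal.span_singleton_le_iff_mem _).2 <| not_not.1 fun hbn =>
        hkn ((mem_locAt_iff _).2 ⟨b, hbn, hbk⟩)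
    have hfin : {n : X | k ∉ locAt R K n.1 (hX n.1 n.2)}.Finite :=
      ((hR.finite_setOf_isMaximal_le (I := Ideal.span {b}) (by simpa using hb0)).preimage
        Subtype.val_injective.injOn).subset fun n hkn => ⟨hX n.1 n.2, hb_mem n hkn⟩
    obtain ⟨s, hs, hsk⟩ := Submodule.exists_smul_mem_iInf_of_finite m'.primeCompl _ hfin
      fun n => hR.exists_smul_mem_locAt (hX n.1 n.2) (fun h : n.1 = m' => hm'X (h ▸ n.2)) hb0 hbk
    exact ⟨s, hs, by rw [← map_smul]; exact Submodule.mem_map_of_mem hsk⟩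
end

section
/- Let R be a local almost perfect domain with maximal ideal m and Q ≠ R. If M is a finitely presented R-module with projective dimension at most 1 and Ext¹_R(M, R/m) = 0, then M is projective (equivalently, free). -/
universe u

open CategoryTheory Limits

/-!
Let `K ↪ P₀ ↠ M` be the first step of a projective resolution of `M` and `k = R/𝔪`.
The vanishing of `Ext¹(M, k)` says that every linear map `K → k` extends to `P₀`; since `k` is a
field, dualising turns this into injectivity of `k ⊗ K → k ⊗ P₀`, i.e. `Tor₁(k, M) = 0`.
As `P₀` is flat, this makes `𝔪 ⊗ M → M` injective, and a finitely presented module over a local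
ring with that property is free.
-/

namespace CategoryTheory.ProjectiveResolution

theorem exists_d_comp_eq_of_subsingleton_ext_one {R : Type*} [Ring R] {C : Type*} [Category* C]
    [Abelian C] [Linear R C] [EnoughProjectives C] {X Y : C} (P : ProjectiveResolution X)
    (hext : Subsingleton (((Ext R C 1).obj (Opposite.op X)).obj Y))
    (f : P.complex.X 1 ⟶ Y) (hf : P.complex.d 2 1 ≫ f = 0) :
    ∃ g : P.complex.X 0 ⟶ Y, P.complex.d 1 0 ≫ g = f := by
  have hD : (P.complex.linearYonedaObj R Y).ExactAt 1 :=
    (HomologicalComplex.exactAt_iff_isZero_homology _ _).2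
      ((ModuleCat.isZero_of_subsingleton _).of_iso (P.isoExt 1 Y).symm)
  rw [HomologicalComplex.exactAt_iff' _ 0 1 2 (by simp) (by simp),
    ShortComplex.moduleCat_exact_iff] at hD
  exact hD f hf

theorem exists_comp_subtype_eq_of_subsingleton_ext_one {R : Type u} [CommRing R]
    {M N : ModuleCat.{u} R} (P : ProjectiveResolution M)
    (hext : Subsingleton (((Ext R (ModuleCat.{u} R) 1).obj (Opposite.op M)).obj N))
    (φ : LinearMap.ker (P.π.f 0).hom →ₗ[R] N) :
    ∃ ψ : P.complex.X 0 →ₗ[R] N, ψ ∘ₗ (LinearMap.ker (P.π.f 0).hom).subtype = φ := by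
  have hd : ∀ x, (P.π.f 0).hom (P.complex.d 1 0 x) = 0 := fun x => by
    rw [← ModuleCat.comp_apply, P.complex_d_comp_π_f_zero]
    rfl
  let d : P.complex.X 1 →ₗ[R] LinearMap.ker (P.π.f 0).hom :=
    (P.complex.d 1 0).hom.codRestrict _ hd
  have hd_surj : Function.Surjective d := fun ⟨x, hx⟩ => by
    obtain ⟨y, rfl⟩ := (ShortComplex.moduleCat_exact_iff _).1 P.exact₀ x hx
    exact ⟨y, rfl⟩
  have hdd : ∀ x, d (P.complex.d 2 1 x) = 0 := fun x =>
    Subtype.ext congr($(P.complex.d_comp_d 2 1 0) x)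
  obtain ⟨g, hg⟩ := P.exists_d_comp_eq_of_subsingleton_ext_one hext (ModuleCat.ofHom (φ ∘ₗ d)) <| by
    ext x
    change φ (d (P.complex.d 2 1 x)) = 0
    rw [hdd, map_zero]
  refine ⟨g.hom, LinearMap.ext fun x => ?_⟩
  obtain ⟨y, rfl⟩ := hd_surj x
  exact congr($hg y)

end CategoryTheory.ProjectiveResolution

theorem LinearMap.lTensor_injective_of_forall_exists_comp_eq {R : Type*} [CommRing R]
    {I : Ideal R} [I.IsMaximal] {K P : Type*} [AddCommGroup K] [Module R K]
    [AddCommGroup P] [Module R P] (ι : K →ₗ[R] P)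
    (h : ∀ φ : K →ₗ[R] R ⧸ I, ∃ ψ : P →ₗ[R] R ⧸ I, ψ ∘ₗ ι = φ) :
    Function.Injective (ι.lTensor (R ⧸ I)) := by
  let := Ideal.Quotient.field I
  rw [← LinearMap.baseChange_eq_ltensor, injective_iff_map_eq_zero]
  intro x hx
  refine (Module.forall_dual_apply_eq_zero_iff (R ⧸ I) x).mp fun φ => ?_
  obtain ⟨ψ, hψ⟩ := h ((LinearMap.liftBaseChangeEquiv (R ⧸ I)).symm φ)
  have : φ = ψ.liftBaseChange (R ⧸ I) ∘ₗ ι.baseChange (R ⧸ I) := by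
    refine TensorProduct.AlgebraTensorModule.ext fun a y => ?_
    rw [comp_apply, baseChange_tmul, liftBaseChange_tmul, ← comp_apply ψ ι, hψ,
      liftBaseChangeEquiv_symm_apply, ← map_smul, TensorProduct.smul_tmul', smul_eq_mul, mul_one]
  rw [this, LinearMap.comp_apply, hx, map_zero]

theorem Module.free_of_flat_of_lTensor_injective {R M N P : Type*} [CommRing R] [IsLocalRing R]
    [AddCommGroup M] [Module R M] [AddCommGroup N] [Module R N] [AddCommGroup P] [Module R P]
    [Module.Flat R N] [Module.FinitePresentation R P]
    {f : M →ₗ[R] N} {g : N →ₗ[R] P} (hfg : Function.Exact f g) (hg : Function.Surjective g)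
    (hf : Function.Injective (f.lTensor (R ⧸ IsLocalRing.maximalIdeal R))) :
    Module.Free R P := by
  apply Module.free_of_maximalIdeal_rTensor_injective
  rw [← LinearMap.lTensor_inj_iff_rTensor_inj]
  exact lTensor_injective_of_exact_of_exact_of_rTensor_injective hfg hg
    (LinearMap.exact_subtype_mkQ _) (Submodule.mkQ_surjective _)
    ((LinearMap.lTensor_inj_iff_rTensor_inj _ _).mp hf)
    (Module.Flat.lTensor_preserves_injective_linearMap _ Subtype.val_injective)

open CategoryTheory in
theorem projective_of_ext_vanish_general (R : Type u) [CommRing R] [IsLocalRing R]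
    (M : Type u) [AddCommGroup M] [Module R M] [Module.FinitePresentation R M]
    (hext : Subsingleton (((Ext R (ModuleCat.{u} R) 1).obj
      (Opposite.op (ModuleCat.of R M))).obj
        (ModuleCat.of R (R ⧸ IsLocalRing.maximalIdeal R)))) :
    Module.Projective R M := by
  let P := ProjectiveResolution.of (ModuleCat.of R M)
  have hπ : Function.Surjective (P.π.f 0).hom :=
    (ModuleCat.epi_iff_surjective _).1 inferInstance
  have hinj := (LinearMap.ker (P.π.f 0).hom).subtype.lTensor_injective_of_forall_exists_comp_eq
    (P.exists_comp_subtype_eq_of_subsingleton_ext_one hext)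
  have : Module.Free R M :=
    Module.free_of_flat_of_lTensor_injective (LinearMap.exact_subtype_ker_map _) hπ hinj
  infer_instance

open CategoryTheory in
/-- Over a local almost perfect domain `(R, m)` that is not a field, a finitely presented
module of projective dimension at most `1` with `Ext¹_R(M, R/m) = 0` is projective
(equivalently, free). -/
theorem projective_of_ext_vanish (R : Type u) [CommRing R] [IsDomain R] [IsLocalRing R]
    (hR : IsAPD R) (hQ : ¬ IsField R)
    (M : Type u) [AddCommGroup M] [Module R M] [Module.FinitePresentation R M]
    (hpd : ProjDimLE R 1 (ModuleCat.of R M))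
    (hext : Subsingleton (((Ext R (ModuleCat.{u} R) 1).obj
      (Opposite.op (ModuleCat.of R M))).obj
        (ModuleCat.of R (R ⧸ IsLocalRing.maximalIdeal R)))) :
    Module.Projective R M :=
  projective_of_ext_vanish_general R M hext
end
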